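/- Suppose Assumptions A1 and A2 hold and the UV-decomposition is used. Then the limiting subdifferential of the U-Lagrangian at 0 is a singleton: ∂L_ε(0; ḡ_v) = {ḡ_u}. -/

import Mathlib

open Set Filter Topology
open scoped RealInnerProductSpace

noncomputable section

variable {F : Type*} [NormedAddCommGroup F] [InnerProductSpace ℝ F]

/-- The Fréchet (regular) normal cone to a set `C` at `x`. -/
def frechetNormalCone (C : Set F) (x : F) : Set F :=
  {v | ∀ δ > (0:ℝ), ∃ r > (0:ℝ), ∀ x' ∈ C, ‖x' - x‖ < r → ⟪v, x' - x⟫ ≤ δ * ‖x' - x‖}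

/-- The limiting (Mordukhovich) normal cone to a set `C` at `x`. -/
def limitingNormalCone (C : Set F) (x : F) : Set F :=
  {v | ∃ xs : ℕ → F, ∃ vs : ℕ → F, (∀ k, xs k ∈ C) ∧ Tendsto xs atTop (𝓝 x) ∧
    (∀ k, vs k ∈ frechetNormalCone C (xs k)) ∧ Tendsto vs atTop (𝓝 v)}

/-- `C` is locally closed at `x`. -/
def LocallyClosedAt (C : Set F) (x : F) : Prop := ∃ U ∈ 𝓝 x, IsClosed (C ∩ U)

/-- Prox-regularity of the set `C` at `xb` for the normal vector `wb`,
with respect to `ε` and `ρ`. -/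
def ProxRegularSetAt (C : Set F) (xb wb : F) (ε ρ : ℝ) : Prop :=
  0 < ε ∧ 0 ≤ ρ ∧ LocallyClosedAt C xb ∧ xb ∈ C ∧ wb ∈ limitingNormalCone C xb ∧
    ∀ x w : F, ‖x - xb‖ < ε → w ∈ limitingNormalCone C x → ‖w - wb‖ < ε →
      ∀ x' ∈ C, ‖x' - xb‖ ≤ ε → ⟪w, x' - x⟫ ≤ ρ / 2 * ‖x' - x‖ ^ 2

/-- Clarke regularity of a set at a point: the set is locally closed there and every
limiting normal is a Fréchet (regular) normal. -/
def ClarkeRegularSetAt (C : Set F) (x : F) : Prop :=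
  LocallyClosedAt C x ∧ limitingNormalCone C x ⊆ frechetNormalCone C x

/-- The Fréchet subdifferential of `f : F → ℝ ∪ {±∞}` at `x`. -/
def frechetSubdiff (f : F → EReal) (x : F) : Set F :=
  {v | ∃ a : ℝ, f x = (a : EReal) ∧ ∀ δ > (0:ℝ), ∃ r > (0:ℝ), ∀ x' : F, ‖x' - x‖ < r →
    ((a + ⟪v, x' - x⟫ - δ * ‖x' - x‖ : ℝ) : EReal) ≤ f x'}

/-- The limiting subdifferential of `f` at `x` (with `f`-attentive convergence). -/
def limSubdiff (f : F → EReal) (x : F) : Set F :=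
  {v | ∃ xs : ℕ → F, ∃ vs : ℕ → F, Tendsto xs atTop (𝓝 x) ∧
    Tendsto (fun k => f (xs k)) atTop (𝓝 (f x)) ∧
    (∀ k, vs k ∈ frechetSubdiff f (xs k)) ∧ Tendsto vs atTop (𝓝 v)}

/-- The epigraph of `f`, viewed inside the `L²`-product `F ×₂ ℝ`. -/
def epiSet (f : F → EReal) : Set (WithLp 2 (F × ℝ)) :=
  {p | f (WithLp.equiv 2 (F × ℝ) p).1 ≤ ((WithLp.equiv 2 (F × ℝ) p).2 : EReal)}

/-- Prox-regularity of the function `f` at `xb` for the subgradient `vb`, with respect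
to `ε` and `ρ`. -/
def ProxRegularFnAt (f : F → EReal) (xb vb : F) (ε ρ : ℝ) : Prop :=
  0 < ε ∧ 0 ≤ ρ ∧ vb ∈ limSubdiff f xb ∧
  ∃ a : ℝ, f xb = (a : EReal) ∧ (∃ U ∈ 𝓝 xb, ∀ x ∈ U, LowerSemicontinuousAt f x) ∧
    ∀ (x x' v : F) (b : ℝ), f x = (b : EReal) → |b - a| < ε → ‖x - xb‖ < ε →
      v ∈ limSubdiff f x → ‖v - vb‖ < ε → ‖x' - xb‖ ≤ ε →
      ((b + ⟪v, x' - x⟫ - ρ / 2 * ‖x' - x‖ ^ 2 : ℝ) : EReal) ≤ f x'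

/-- `f` is properly prox-regular at `xb` w.r.t. `ε`, `ρ`: it is prox-regular there for every
limiting subgradient, and its epigraph is prox-regular at `(xb, f xb)` for every normal of
the form `(g, -1)`. -/
def ProperlyProxRegularAt (f : F → EReal) (xb : F) (ε ρ : ℝ) : Prop :=
  (∀ g ∈ limSubdiff f xb, ProxRegularFnAt f xb g ε ρ) ∧
  ∃ a : ℝ, f xb = (a : EReal) ∧
    ∀ g : F, (WithLp.equiv 2 (F × ℝ)).symm (g, -1) ∈
        limitingNormalCone (epiSet f) ((WithLp.equiv 2 (F × ℝ)).symm (xb, a)) →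
      ProxRegularSetAt (epiSet f) ((WithLp.equiv 2 (F × ℝ)).symm (xb, a))
        ((WithLp.equiv 2 (F × ℝ)).symm (g, -1)) ε ρ

/-- Assumption A1: `f` is proper, lower semicontinuous on the whole space, and properly
prox-regular at `xb` with respect to `eb` and `ρ`. -/
def AssumptionA1 (f : F → EReal) (xb : F) (eb ρ : ℝ) : Prop :=
  (∀ x, f x ≠ ⊥) ∧ (∃ x, f x ≠ ⊤) ∧ LowerSemicontinuous f ∧ ProperlyProxRegularAt f xb eb ρ

/-- `D_ε f`: the set of `g` such that `g + int B_V(0, ε) ⊆ ∂f(xb)`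
(the `ε`-relative interior of `∂f(xb)` when the UV-decomposition is used). -/
def DEps (f : F → EReal) (xb : F) (V : Submodule ℝ F) (ε : ℝ) : Set F :=
  {g | ∀ w ∈ V, ‖w‖ < ε → g + w ∈ limSubdiff f xb}

/-- Orthogonal projection onto a submodule, as a map into the ambient space. -/
def projV (V : Submodule ℝ F) [Submodule.HasOrthogonalProjection V] (x : F) : F :=
  (Submodule.orthogonalProjectionOnto V x : F)

/-- The U-Lagrangian `L_ε(u; gb_v)`. -/
def ULagrangian (f : F → EReal) (xb gb : F) (V : Submodule ℝ F) [Submodule.HasOrthogonalProjection V]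
    (ε : ℝ) (u : ↥(Vᗮ)) : EReal :=
  sInf ((fun v : F => f (xb + ↑u + v) - ((⟪projV V gb, v⟫ : ℝ) : EReal)) ''
    {v : F | v ∈ V ∧ ‖v‖ ≤ ε})

/-- The set `W(u; gb_v)` of minimizers defining the U-Lagrangian (with the convention
that the argmin is empty when the infimum is `+∞`). -/
def Wset (f : F → EReal) (xb gb : F) (V : Submodule ℝ F) [Submodule.HasOrthogonalProjection V]
    (ε : ℝ) (u : ↥(Vᗮ)) : Set ↥V :=
  {v : ↥V | ‖(v : F)‖ ≤ ε ∧
    f (xb + ↑u + ↑v) - ((⟪projV V gb, (v:F)⟫ : ℝ) : EReal) = ULagrangian f xb gb V ε u ∧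
    ULagrangian f xb gb V ε u ≠ ⊤}

/-- The function `h(u,v) = f(xb+u+v) - ⟪gb_v, v⟫ + δ_{B_V(0,ε)}(v)` on `U ×₂ V`. -/
def hFun (f : F → EReal) (xb gb : F) (V : Submodule ℝ F) [Submodule.HasOrthogonalProjection V] (ε : ℝ)
    (p : WithLp 2 (↥(Vᗮ) × ↥V)) : EReal :=
  f (xb + ↑(WithLp.equiv 2 (↥(Vᗮ) × ↥V) p).1 + ↑(WithLp.equiv 2 (↥(Vᗮ) × ↥V) p).2)
    - ((⟪projV V gb, ((WithLp.equiv 2 (↥(Vᗮ) × ↥V) p).2 : F)⟫ : ℝ) : EReal)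
    + (if ‖((WithLp.equiv 2 (↥(Vᗮ) × ↥V) p).2 : F)‖ ≤ ε then (0 : EReal) else ⊤)

/-- `g` is a proximal subgradient of `φ` at `xb`. -/
def IsProximalSubgradient (φ : F → EReal) (xb g : F) : Prop :=
  ∃ a : ℝ, φ xb = (a : EReal) ∧ ∃ ε > (0:ℝ), ∃ ρ > (0:ℝ), ∀ x : F, ‖x - xb‖ ≤ ε →
    ((a + ⟪g, x - xb⟫ - ρ / 2 * ‖x - xb‖ ^ 2 : ℝ) : EReal) ≤ φ x

/-- The localized tilted argmin mapping used in the definition of tilt stability. -/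
def tiltArgmin (φ : F → EReal) (xb : F) (a δ : ℝ) (g : F) : Set F :=
  {x | ‖x - xb‖ ≤ δ ∧ ∀ y : F, ‖y - xb‖ ≤ δ →
    φ x - ((a + ⟪g, x - xb⟫ : ℝ) : EReal) ≤ φ y - ((a + ⟪g, y - xb⟫ : ℝ) : EReal)}

/-- `xb` gives a tilt-stable local minimum of `φ`. -/
def TiltStableLocalMin (φ : F → EReal) (xb : F) : Prop :=
  ∃ a : ℝ, φ xb = (a : EReal) ∧ ∃ δ > (0:ℝ), ∃ M : F → F, ∃ η > (0:ℝ), ∃ L : ℝ,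
    M 0 = xb ∧ (∀ g g' : F, ‖g‖ < η → ‖g'‖ < η → ‖M g - M g'‖ ≤ L * ‖g - g'‖) ∧
    ∀ g : F, ‖g‖ < η → tiltArgmin φ xb a δ g = {M g}

/-- Strict differentiability (with gradient vector `A`) of an extended-real-valued
function at `xb`. -/
def StrictDiffAt (φ : F → EReal) (xb A : F) : Prop :=
  (∃ a : ℝ, φ xb = (a : EReal)) ∧ ∀ δ > (0:ℝ), ∃ r > (0:ℝ), ∀ x x' : F,
    ‖x - xb‖ < r → ‖x' - xb‖ < r →
    ∃ a b : ℝ, φ x = (a : EReal) ∧ φ x' = (b : EReal) ∧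
      |b - a - ⟪A, x' - x⟫| ≤ δ * ‖x' - x‖

/-- `φ` is subdifferentially continuous at `xb` (for every subgradient there). -/
def SubdiffContinuousAt (φ : F → EReal) (xb : F) : Prop :=
  ∀ vb ∈ limSubdiff φ xb, ∀ xs : ℕ → F, ∀ vs : ℕ → F, Tendsto xs atTop (𝓝 xb) →
    (∀ k, vs k ∈ limSubdiff φ (xs k)) → Tendsto vs atTop (𝓝 vb) →
    Tendsto (fun k => φ (xs k)) atTop (𝓝 (φ xb))

/-- Strong metric regularity of the subdifferential map `∂φ` at `(xb, yb)`: the inverse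
admits a Lipschitz single-valued localization around `(yb, xb)`. -/
def StronglyMetricallyRegularSubdiffAt (φ : F → EReal) (xb yb : F) : Prop :=
  yb ∈ limSubdiff φ xb ∧ ∃ a > (0:ℝ), ∃ b > (0:ℝ), ∃ L : ℝ, ∃ s : F → F,
    (∀ g g' : F, ‖g - yb‖ < a → ‖g' - yb‖ < a → ‖s g - s g'‖ ≤ L * ‖g - g'‖) ∧
    ∀ g : F, ‖g - yb‖ < a → ‖s g - xb‖ < b ∧
      ∀ x : F, ‖x - xb‖ < b → (g ∈ limSubdiff φ x ↔ x = s g)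

/-- `f` is subdifferentially regular at `x`: `f x` is finite and the epigraph is Clarke
regular at `(x, f x)`. -/
def SubdiffRegularAt (f : F → EReal) (x : F) : Prop :=
  ∃ a : ℝ, f x = (a : EReal) ∧
    ClarkeRegularSetAt (epiSet f) ((WithLp.equiv 2 (F × ℝ)).symm (x, a))

/-- `M` is (around `yb`) a `C^k`-smooth manifold: locally the common zero set of finitely
many `C^k` functions with linearly independent gradients at `yb`. -/
def IsManifoldAround [CompleteSpace F] (M : Set F) (yb : F) (k : WithTop ℕ∞) : Prop :=
  ∃ m : ℕ, ∃ Q : Set F, ∃ φ : Fin m → F → ℝ, IsOpen Q ∧ yb ∈ Q ∧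
    (∀ i, ContDiff ℝ k (φ i)) ∧ (M ∩ Q = {y ∈ Q | ∀ i, φ i y = 0}) ∧
    LinearIndependent ℝ fun i => gradient (φ i) yb

/-- Continuity (inner- and outer-semicontinuity) of `∂f` at `xb` relative to `M`. -/
def SubdiffContinuousRelAt (f : F → EReal) (M : Set F) (xb : F) : Prop :=
  (∀ g ∈ limSubdiff f xb, ∀ xs : ℕ → F, (∀ k, xs k ∈ M) → Tendsto xs atTop (𝓝 xb) →
      ∃ gs : ℕ → F, (∀ k, gs k ∈ limSubdiff f (xs k)) ∧ Tendsto gs atTop (𝓝 g)) ∧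
  (∀ g : F, ∀ xs : ℕ → F, ∀ gs : ℕ → F, (∀ k, xs k ∈ M) → Tendsto xs atTop (𝓝 xb) →
      (∀ k, gs k ∈ limSubdiff f (xs k)) → Tendsto gs atTop (𝓝 g) → g ∈ limSubdiff f xb)

/-- `f` is `C^k`-partly smooth at `xb` relative to `M`, with `V`-space `V`. -/
def PartlySmoothAt [CompleteSpace F] (f : F → EReal) (xb : F) (M : Set F)
    (V : Submodule ℝ F) (k : WithTop ℕ∞) : Prop :=
  IsManifoldAround M xb k ∧ xb ∈ M ∧
  (∃ N : Set F, IsOpen N ∧ xb ∈ N ∧ ∃ g : F → ℝ, ContDiff ℝ k g ∧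
      ∀ y ∈ M ∩ N, f y = ((g y : ℝ) : EReal)) ∧
  (∃ δ > (0:ℝ), ∀ y ∈ M, ‖y - xb‖ < δ → SubdiffRegularAt f y ∧ (limSubdiff f y).Nonempty) ∧
  limitingNormalCone M xb = (V : Set F) ∧
  SubdiffContinuousRelAt f M xb

/-- The subderivative `df(xb)(w)`. -/
def subderiv (f : F → EReal) (xb : F) (w : F) : EReal :=
  liminf (fun p : ℝ × F => (((p.1)⁻¹ : ℝ) : EReal) * (f (xb + p.1 • p.2) - f xb))
    ((𝓝[>] (0:ℝ)) ×ˢ 𝓝 w)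

/-- The normal cone to a convex set `C` at `x` in the sense of convex analysis. -/
def convexNormalCone (C : Set F) (x : F) : Set F :=
  {w | ∀ y ∈ C, ⟪w, y - x⟫ ≤ 0}

/-!
Prox-regularity of `f` at `xb` for the subgradients `gb + w`, `w ∈ V` small, yields quadratic
minorants of `f`; tilting them by `w = t • v / ‖v‖` shows that `v ↦ f (xb + u + v) - ⟪gb_v, v⟫`
grows linearly in `‖v‖`, up to a term quadratic in `u`. Hence
`L(u) ≥ L(0) + ⟪gb, u⟫ - ρ/2 ‖u‖²`, so `gb_u` is a proximal subgradient of `L` at `0`. Conversely,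
the same growth forces the minimizers `v(u)` to tend to `0` as `u → 0`, so a subgradient `g` of `L`
along `u_k → 0` lifts to regular subgradients `g + gb_v` of `f` at `xb + u_k + v(u_k) → xb`.
Thus `g + gb_v ∈ ∂f(xb) ⊆ gb + V`, and `g ∈ Vᗮ` forces `g = gb_u`.
-/

namespace EReal

lemma coe_le_sub_coe_iff {x : EReal} {s r : ℝ} :
    (s : EReal) ≤ x - r ↔ ((s + r : ℝ) : EReal) ≤ x := by
  rw [le_sub_iff_add_le (.inl (coe_ne_bot r)) (.inl (coe_ne_top r)), coe_add]

lemma eq_coe_add_of_sub_coe_eq {x : EReal} {b r : ℝ} (h : x - r = b) :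
    x = ((b + r : ℝ) : EReal) := by
  rw [← EReal.sub_add_cancel (a := x) (b := r), h, coe_add]

end EReal

lemma frechetSubdiff_subset_limSubdiff {f : F → EReal} {x : F} :
    frechetSubdiff f x ⊆ limSubdiff f x := fun v hv =>
  ⟨fun _ => x, fun _ => v, tendsto_const_nhds, tendsto_const_nhds, fun _ => hv, tendsto_const_nhds⟩

lemma mem_limSubdiff_of_eventually {f : F → EReal} {x v : F} {xs vs : ℕ → F}
    (hxs : Tendsto xs atTop (𝓝 x)) (hfxs : Tendsto (fun k => f (xs k)) atTop (𝓝 (f x)))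
    (hvs_mem : ∀ᶠ k in atTop, vs k ∈ frechetSubdiff f (xs k)) (hvs : Tendsto vs atTop (𝓝 v)) :
    v ∈ limSubdiff f x := by
  obtain ⟨N, hN⟩ := eventually_atTop.1 hvs_mem
  have hshift := tendsto_add_atTop_nat N
  exact ⟨fun k => xs (k + N), fun k => vs (k + N), hxs.comp hshift, hfxs.comp hshift,
    fun k => hN _ (Nat.le_add_left N k), hvs.comp hshift⟩

lemma IsProximalSubgradient.mem_frechetSubdiff {φ : F → EReal} {x g : F}
    (h : IsProximalSubgradient φ x g) : g ∈ frechetSubdiff φ x := by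
  obtain ⟨a, hφx, r, hr, ρ, hρ, hle⟩ := h
  refine ⟨a, hφx, fun δ hδ => ⟨min r (2 * δ / ρ), lt_min hr (by positivity), fun y hy => ?_⟩⟩
  have hquad : ρ / 2 * ‖y - x‖ ^ 2 ≤ δ * ‖y - x‖ := by
    have : ρ * ‖y - x‖ ≤ 2 * δ := (lt_div_iff₀' hρ).1 (hy.trans_le (min_le_right _ _)) |>.le
    nlinarith [norm_nonneg (y - x)]
  exact le_trans (EReal.coe_le_coe_iff.2 (by linarith)) (hle y (hy.trans_le (min_le_left _ _)).le)

lemma ProxRegularFnAt.exists_quadratic_minorant {f : F → EReal} {xb vb : F} {ε ρ : ℝ}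
    (h : ProxRegularFnAt f xb vb ε ρ) :
    ∃ a : ℝ, f xb = a ∧ ∀ v ∈ limSubdiff f xb, ‖v - vb‖ < ε → ∀ x, ‖x - xb‖ ≤ ε →
      ((a + ⟪v, x - xb⟫ - ρ / 2 * ‖x - xb‖ ^ 2 : ℝ) : EReal) ≤ f x := by
  obtain ⟨hε, -, -, a, hfa, -, hprox⟩ := h
  exact ⟨a, hfa, fun v hv hvv x hx =>
    hprox xb x v a hfa (by simpa using hε) (by simpa using hε) hv hvv hx⟩

lemma inner_projV_of_mem {V : Submodule ℝ F} [V.HasOrthogonalProjection] (g : F) {v : F}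
    (hv : v ∈ V) : ⟪projV V g, v⟫ = ⟪g, v⟫ := by
  rw [projV, ← Submodule.inner_orthogonalProjectionOnto_eq_of_mem_right ⟨v, hv⟩ g,
    Submodule.coe_inner]

section Tilt

variable {V : Submodule ℝ F} [V.HasOrthogonalProjection]

lemma exists_tilt_le {g u v : F} {ε ρ t : ℝ} (hρ : 0 ≤ ρ) (ht : 0 ≤ t) (htε : t < ε)
    (hu : u ∈ Vᗮ) (hv : v ∈ V) (hvε : ‖v‖ ≤ ε) :
    ∃ w ∈ V, ‖w‖ < ε ∧ ⟪g, u⟫ + ⟪projV V g, v⟫ - ρ / 2 * ‖u‖ ^ 2 + (t - ρ * ε / 2) * ‖v‖ ≤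
      ⟪g + w, u + v⟫ - ρ / 2 * ‖u + v‖ ^ 2 := by
  refine ⟨(t / ‖v‖) • v, V.smul_mem _ hv, ?_, ?_⟩
  · rw [norm_smul, Real.norm_of_nonneg (by positivity)]
    rcases (norm_nonneg v).eq_or_lt with hv0 | hv0
    · rw [← hv0, mul_zero]; linarith
    · rwa [div_mul_cancel₀ _ hv0.ne']
  · have huv : ⟪u, v⟫ = 0 := Submodule.inner_left_of_mem_orthogonal hv hu
    have hwv : ⟪(t / ‖v‖) • v, v⟫ = t * ‖v‖ := by
      rw [real_inner_smul_left, real_inner_self_eq_norm_sq]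
      rcases (norm_nonneg v).eq_or_lt with hv0 | hv0
      · rw [← hv0]; ring
      · field_simp
    have hwu : ⟪(t / ‖v‖) • v, u⟫ = 0 :=
      Submodule.inner_right_of_mem_orthogonal (V.smul_mem _ hv) hu
    rw [inner_add_left, inner_add_right, inner_add_right, hwu, hwv, inner_projV_of_mem g hv,
      norm_add_sq_real, huv]
    nlinarith [mul_le_mul_of_nonneg_left hvε (norm_nonneg v)]

lemma le_sub_inner_projV_of_tilted_minorants {f : F → EReal} {xb g u v : F} {a ε eb ρ t : ℝ}
    (hρ : 0 ≤ ρ) (ht : 0 ≤ t) (htε : t < ε)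
    (hf : ∀ w ∈ V, ‖w‖ < ε → ∀ x, ‖x - xb‖ ≤ eb →
      ((a + ⟪g + w, x - xb⟫ - ρ / 2 * ‖x - xb‖ ^ 2 : ℝ) : EReal) ≤ f x)
    (hu : u ∈ Vᗮ) (hueb : ‖u‖ ≤ eb - ε) (hv : v ∈ V) (hvε : ‖v‖ ≤ ε) :
    ((a + ⟪g, u⟫ - ρ / 2 * ‖u‖ ^ 2 + (t - ρ * ε / 2) * ‖v‖ : ℝ) : EReal) ≤
      f (xb + u + v) - ⟪projV V g, v⟫ := by
  obtain ⟨w, hw, hwε, hle⟩ := exists_tilt_le (g := g) hρ ht htε hu hv hvε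
  have hx : xb + u + v - xb = u + v := by abel
  have hxeb : ‖xb + u + v - xb‖ ≤ eb := hx ▸ (norm_add_le u v).trans (by linarith)
  rw [EReal.coe_le_sub_coe_iff]
  refine le_trans (EReal.coe_le_coe_iff.2 ?_) (hf w hw hwε _ hxeb)
  rw [hx]
  linarith

end Tilt

section ULagrangian

variable {f : F → EReal} {xb gb : F} {V : Submodule ℝ F} [V.HasOrthogonalProjection] {ε : ℝ}

lemma ULagrangian_le_sub (u : ↥Vᗮ) {v : F} (hv : v ∈ V) (hvε : ‖v‖ ≤ ε) :
    ULagrangian f xb gb V ε u ≤ f (xb + u + v) - ⟪projV V gb, v⟫ :=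
  sInf_le ⟨v, ⟨hv, hvε⟩, rfl⟩

lemma le_ULagrangian {u : ↥Vᗮ} {m : EReal}
    (h : ∀ v ∈ V, ‖v‖ ≤ ε → m ≤ f (xb + u + v) - ⟪projV V gb, v⟫) :
    m ≤ ULagrangian f xb gb V ε u :=
  le_sInf <| by
    rintro _ ⟨v, ⟨hv, hvε⟩, rfl⟩
    exact h v hv hvε

lemma le_ULagrangian_of_growth {u : ↥Vᗮ} {m c : ℝ} (hc : 0 ≤ c)
    (h : ∀ v ∈ V, ‖v‖ ≤ ε → ((m + c * ‖v‖ : ℝ) : EReal) ≤ f (xb + u + v) - ⟪projV V gb, v⟫) :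
    (m : EReal) ≤ ULagrangian f xb gb V ε u :=
  le_ULagrangian fun v hv hvε =>
    (EReal.coe_le_coe_iff.2 (le_add_of_nonneg_right (by positivity))).trans (h v hv hvε)

lemma ULagrangian_zero_eq {a : ℝ} (hfa : f xb = a) (hε : 0 ≤ ε)
    (hle : (a : EReal) ≤ ULagrangian f xb gb V ε 0) : ULagrangian f xb gb V ε 0 = a := by
  have hge : ULagrangian f xb gb V ε 0 ≤ f (xb + (0 : ↥Vᗮ) + 0) - ⟪projV V gb, (0 : F)⟫ :=
    ULagrangian_le_sub 0 V.zero_mem (by simpa using hε)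
  exact le_antisymm (by simpa [hfa] using hge) hle

lemma Wset_nonempty [FiniteDimensional ℝ V] (hf : LowerSemicontinuous f) (hε : 0 ≤ ε)
    {u : ↥Vᗮ} (hu : ULagrangian f xb gb V ε u ≠ ⊤) : (Wset f xb gb V ε u).Nonempty := by
  set φ : ↥V → EReal := fun v => f (xb + u + v) - ⟪projV V gb, (v : F)⟫
  have hφ : LowerSemicontinuous φ := by
    refine LowerSemicontinuous.add' (hf.comp (g := fun v : ↥V => xb + u + v) (by fun_prop)) ?_
      fun v => ?_
    · exact (continuous_coe_real_ereal.comp (by fun_prop)).lowerSemicontinuous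
    · exact EReal.continuousAt_add (.inr (EReal.coe_ne_bot _)) (.inr (EReal.coe_ne_top _))
  obtain ⟨v, hv, hmin⟩ := (hφ.lowerSemicontinuousOn _).exists_isMinOn
    (Metric.nonempty_closedBall.2 hε) (isCompact_closedBall 0 ε)
  have hvε : ‖(v : F)‖ ≤ ε := by simpa using hv
  refine ⟨v, hvε, le_antisymm ?_ (ULagrangian_le_sub u v.2 hvε), hu⟩
  exact le_ULagrangian fun w hw hwε => hmin (a := ⟨w, hw⟩) (by simpa using hwε)

lemma add_projV_mem_frechetSubdiff {u g : ↥Vᗮ} {v : ↥V}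
    (hg : g ∈ frechetSubdiff (ULagrangian f xb gb V ε) u) (hv : v ∈ Wset f xb gb V ε u)
    (hvε : ‖v‖ < ε) : (g : F) + projV V gb ∈ frechetSubdiff f (xb + u + v) := by
  obtain ⟨b, hb, hg⟩ := hg
  refine ⟨b + ⟪projV V gb, v⟫, EReal.eq_coe_add_of_sub_coe_eq (hv.2.1.trans hb), fun δ hδ => ?_⟩
  obtain ⟨r, hr, hg⟩ := hg δ hδ
  refine ⟨min r (ε - ‖v‖), lt_min hr (sub_pos.2 hvε), fun x hx => ?_⟩
  set d := x - (xb + u + v)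
  set p : ↥Vᗮ := u + Vᗮ.orthogonalProjectionOnto d
  set q : ↥V := v + V.orthogonalProjectionOnto d
  have hx_eq : x = xb + p + q := by
    have hd := V.starProjection_add_starProjection_orthogonal d
    simp only [Submodule.starProjection_apply] at hd
    calc x = xb + u + v + d := (add_sub_cancel _ _).symm
      _ = xb + p + q := by rw [← hd]; simp only [p, q, Submodule.coe_add]; abel
  have hpu : ‖p - u‖ ≤ ‖d‖ := by
    simpa [p] using Vᗮ.norm_orthogonalProjectionOnto_apply_le d
  have hq : ‖(q : F)‖ ≤ ε := calc
    ‖(q : F)‖ ≤ ‖v‖ + ‖d‖ :=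
      (norm_add_le _ _).trans (add_le_add_right (V.norm_orthogonalProjectionOnto_apply_le d) _)
    _ ≤ ε := by linarith [hx.trans_le (min_le_right _ _)]
  have hL := (hg p (hpu.trans_lt (hx.trans_le (min_le_left _ _)))).trans
    (hx_eq ▸ ULagrangian_le_sub p q.2 hq)
  rw [EReal.coe_le_sub_coe_iff] at hL
  refine le_trans (EReal.coe_le_coe_iff.2 ?_) hL
  have hgp : ⟪g, p - u⟫ = ⟪(g : F), d⟫ := by
    simp [p]
  have hgq : ⟪projV V gb, (q : F)⟫ = ⟪projV V gb, (v : F)⟫ + ⟪projV V gb, d⟫ := by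
    rw [Submodule.coe_add, inner_add_right, projV,
      ← V.coe_inner _ (V.orthogonalProjectionOnto d),
      Submodule.inner_orthogonalProjectionOnto_eq_of_mem_left]
  rw [hgp, hgq, inner_add_left]
  nlinarith [mul_le_mul_of_nonneg_left hpu hδ.le]

lemma tendsto_Wset_zero {a c ρ r : ℝ}
    (hgrowth : ∀ u : ↥Vᗮ, ‖u‖ ≤ r → ∀ v ∈ V, ‖v‖ ≤ ε →
      ((a + ⟪gb, (u : F)⟫ - ρ / 2 * ‖u‖ ^ 2 + c * ‖v‖ : ℝ) : EReal) ≤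
        f (xb + u + v) - ⟪projV V gb, v⟫)
    (hc : 0 < c) (hr : 0 < r) {us : ℕ → ↥Vᗮ} {b : ℕ → ℝ} {ws : ℕ → ↥V}
    (hus : Tendsto us atTop (𝓝 0)) (hb : ∀ k, ULagrangian f xb gb V ε (us k) = b k)
    (hb_lim : Tendsto b atTop (𝓝 a)) (hws : ∀ k, ws k ∈ Wset f xb gb V ε (us k)) :
    Tendsto ws atTop (𝓝 0) := by
  have hbound : ∀ᶠ k in atTop,
      ‖ws k‖ ≤ (b k - a - ⟪gb, (us k : F)⟫ + ρ / 2 * ‖us k‖ ^ 2) / c := by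
    filter_upwards [hus.eventually (Metric.closedBall_mem_nhds 0 hr)] with k hk
    have hk := hgrowth (us k) (by simpa using hk) (ws k) (ws k).2 (hws k).1
    rw [(hws k).2.1, hb k, EReal.coe_le_coe_iff] at hk
    rw [le_div_iff₀ hc]
    simp only [Submodule.coe_norm] at hk ⊢
    linarith
  have hus' : Tendsto (fun k => (us k : F)) atTop (𝓝 0) :=
    (continuous_subtype_val.tendsto _).comp hus
  have hlim : Tendsto (fun k => (b k - a - ⟪gb, (us k : F)⟫ + ρ / 2 * ‖us k‖ ^ 2) / c) atTop
      (𝓝 0) := by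
    simpa using ((((hb_lim.sub_const a).sub (tendsto_const_nhds.inner hus')).add
      ((hus.norm.pow 2).const_mul (ρ / 2))).div_const c)
  exact tendsto_zero_iff_norm_tendsto_zero.2
    (squeeze_zero' (Eventually.of_forall fun _ => norm_nonneg _) hbound hlim)

theorem add_projV_mem_limSubdiff [FiniteDimensional ℝ V] {a c ρ r : ℝ}
    (hf : LowerSemicontinuous f) (hfa : f xb = a) (hL0 : ULagrangian f xb gb V ε 0 = a)
    (hgrowth : ∀ u : ↥Vᗮ, ‖u‖ ≤ r → ∀ v ∈ V, ‖v‖ ≤ ε →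
      ((a + ⟪gb, (u : F)⟫ - ρ / 2 * ‖u‖ ^ 2 + c * ‖v‖ : ℝ) : EReal) ≤
        f (xb + u + v) - ⟪projV V gb, v⟫)
    (hc : 0 < c) (hr : 0 < r) (hε : 0 < ε) {g : ↥Vᗮ}
    (hg : g ∈ limSubdiff (ULagrangian f xb gb V ε) 0) :
    (g : F) + projV V gb ∈ limSubdiff f xb := by
  obtain ⟨us, gs, hus, hLus, hgs_mem, hgs⟩ := hg
  choose b hb using fun k => (hgs_mem k).imp fun _ => And.left
  have hb_lim : Tendsto b atTop (𝓝 a) := by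
    simp_rw [hL0, hb] at hLus
    exact EReal.tendsto_coe.1 hLus
  choose ws hws using fun k => Wset_nonempty hf hε.le (hb k ▸ EReal.coe_ne_top (b k))
  have hws0 := tendsto_Wset_zero hgrowth hc hr hus hb hb_lim hws
  have hws0' : Tendsto (fun k => (ws k : F)) atTop (𝓝 0) :=
    (continuous_subtype_val.tendsto _).comp hws0
  have hus' : Tendsto (fun k => (us k : F)) atTop (𝓝 0) :=
    (continuous_subtype_val.tendsto _).comp hus
  have hfx : ∀ k, f (xb + us k + ws k) = ((b k + ⟪projV V gb, ws k⟫ : ℝ) : EReal) := fun k =>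
    EReal.eq_coe_add_of_sub_coe_eq ((hws k).2.1.trans (hb k))
  refine mem_limSubdiff_of_eventually (xs := fun k => xb + us k + ws k)
    (vs := fun k => gs k + projV V gb) ?_ ?_ ?_ ?_
  · simpa using (tendsto_const_nhds.add hus').add hws0'
  · simp_rw [hfx, hfa, EReal.tendsto_coe]
    simpa using hb_lim.add (tendsto_const_nhds.inner hws0')
  · filter_upwards [hws0.eventually (Metric.ball_mem_nhds 0 hε)] with k hk
    exact add_projV_mem_frechetSubdiff (hgs_mem k) (hws k) (by simpa using hk)
  · exact ((continuous_subtype_val.tendsto _).comp hgs).add_const _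

end ULagrangian

lemma sub_mem_span_image_sub {S : Set F} {gt y z : F} (hy : y ∈ S) (hz : z ∈ S) :
    y - z ∈ Submodule.span ℝ ((fun g => g - gt) '' S) := by
  simpa using sub_mem (Submodule.subset_span (mem_image_of_mem (· - gt) hy))
    (Submodule.subset_span (mem_image_of_mem (· - gt) hz))

lemma eq_orthogonalProjectionOnto_of_add_projV_sub_mem {V : Submodule ℝ F}
    [V.HasOrthogonalProjection] {g : ↥Vᗮ} {y : F} (h : (g : F) + projV V y - y ∈ V) :
    g = Vᗮ.orthogonalProjectionOnto y := by
  have hyg : y - g ∈ V := by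
    have := V.sub_mem (show projV V y ∈ V from (V.orthogonalProjectionOnto y).2) h
    rwa [show projV V y - (g + projV V y - y) = y - g by abel] at this
  exact Subtype.ext (Vᗮ.eq_starProjection_of_mem_orthogonal g.2
    (V.le_orthogonal_orthogonal hyg)).symm

theorem ULagrangian_subdiff_singleton_general {n : ℕ} (f : EuclideanSpace ℝ (Fin n) → EReal) (xb : EuclideanSpace ℝ (Fin n)) (eb ρ ε : ℝ) (hε : 0 < ε)
    (hA1 : AssumptionA1 f xb eb ρ) (gt : EuclideanSpace ℝ (Fin n))
    (V : Submodule ℝ (EuclideanSpace ℝ (Fin n)))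
    (hV : V = Submodule.span ℝ ((fun g => g - gt) '' limSubdiff f xb))
    (gb : EuclideanSpace ℝ (Fin n)) (hgb : gb ∈ DEps f xb V ε)
    (hA2 : 0 < ρ ∧ ρ < 2 ∧ ε < eb) :
    limSubdiff (ULagrangian f xb gb V ε) 0 = {Submodule.orthogonalProjectionOnto (Vᗮ) gb} := by
  obtain ⟨hρ, hρ2, hεeb⟩ := hA2
  obtain ⟨-, -, hlsc, hprox, -⟩ := hA1
  have hgb_mem : gb ∈ limSubdiff f xb := by simpa using hgb 0 V.zero_mem (by simpa using hε)
  obtain ⟨a, hfa, hminor⟩ := (hprox gb hgb_mem).exists_quadratic_minorant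
  obtain ⟨t, ht0, htε, hc⟩ : ∃ t, 0 ≤ t ∧ t < ε ∧ 0 < t - ρ * ε / 2 :=
    ⟨ε * (2 + ρ) / 4, by positivity, by nlinarith, by nlinarith⟩
  have hgrowth : ∀ u : ↥Vᗮ, ‖u‖ ≤ eb - ε → ∀ v ∈ V, ‖v‖ ≤ ε →
      ((a + ⟪gb, (u : EuclideanSpace ℝ (Fin n))⟫ - ρ / 2 * ‖u‖ ^ 2 + (t - ρ * ε / 2) * ‖v‖ : ℝ) :
        EReal) ≤ f (xb + u + v) - ⟪projV V gb, v⟫ := fun u hu v hv hvε =>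
    le_sub_inner_projV_of_tilted_minorants hρ.le ht0 htε
      (fun w hw hwε x hx => hminor _ (hgb w hw hwε) (by simpa using hwε.trans hεeb) x hx)
      u.2 (by simpa using hu) hv hvε
  have hlb : ∀ u : ↥Vᗮ, ‖u‖ ≤ eb - ε → ((a + ⟪gb, (u : EuclideanSpace ℝ (Fin n))⟫ -
      ρ / 2 * ‖u‖ ^ 2 : ℝ) : EReal) ≤ ULagrangian f xb gb V ε u := fun u hu =>
    le_ULagrangian_of_growth hc.le (hgrowth u hu)
  have hL0 := ULagrangian_zero_eq hfa hε.le (by simpa using hlb 0 (by simpa using hεeb.le))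
  refine Set.eq_singleton_iff_unique_mem.2 ⟨?_, fun g hg => ?_⟩
  · refine frechetSubdiff_subset_limSubdiff (IsProximalSubgradient.mem_frechetSubdiff
      ⟨a, hL0, eb - ε, sub_pos.2 hεeb, ρ, hρ, fun u hu => ?_⟩)
    simpa using hlb u (by simpa using hu)
  · have hg' := add_projV_mem_limSubdiff hlsc hfa hL0 hgrowth hc (sub_pos.2 hεeb) hε hg
    have hspan := sub_mem_span_image_sub (gt := gt) hg' hgb_mem
    rw [← hV] at hspan
    exact eq_orthogonalProjectionOnto_of_add_projV_sub_mem hspan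

/-- With the UV-decomposition, under Assumptions A1 and A2,
`∂L_ε(0; gb_v) = {gb_u}`. -/
theorem ULagrangian_subdiff_singleton {n : ℕ} (f : EuclideanSpace ℝ (Fin n) → EReal) (xb : EuclideanSpace ℝ (Fin n)) (eb ρ ε : ℝ) (hε : 0 < ε)
    (hA1 : AssumptionA1 f xb eb ρ) (gt : EuclideanSpace ℝ (Fin n)) (hgt : gt ∈ limSubdiff f xb)
    (V : Submodule ℝ (EuclideanSpace ℝ (Fin n)))
    (hV : V = Submodule.span ℝ ((fun g => g - gt) '' limSubdiff f xb))
    (hne : (DEps f xb V ε).Nonempty)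
    (gb : EuclideanSpace ℝ (Fin n)) (hgb : gb ∈ DEps f xb V ε)
    (hA2 : 0 < ρ ∧ ρ < 2 ∧ ε < eb) :
    limSubdiff (ULagrangian f xb gb V ε) 0 = {Submodule.orthogonalProjectionOnto (Vᗮ) gb} :=
  ULagrangian_subdiff_singleton_general f xb eb ρ ε hε hA1 gt V hV gb hgb hA2

end
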